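/- For every positive integer n and every positive integer k ≤ n, (n choose 1,k)_q = [k]_q · q^{n-k} · [n choose k]_q, where (n choose p,k)_q = ([n]_q/[k]_q) · Σ_{r≥0} [p choose r]_q [n-p choose r]_q [n-r-1 choose k-r-1]_q q^{(n-p)p + r(r-k)}. -/

import Mathlib

open Finset

/-- The variable `q`, as a rational function over `ℚ`. -/
noncomputable def q : RatFunc ℚ := RatFunc.X

/-- The q-integer `[m]_q = (1 - q^m)/(1 - q)`. -/
noncomputable def qint (m : ℕ) : RatFunc ℚ := (1 - q ^ m) / (1 - q)

/-- The q-integer for an integer exponent, `[x; q] = (q^x - 1)/(q - 1)`. -/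
noncomputable def qintZ (x : ℤ) : RatFunc ℚ := (q ^ x - 1) / (q - 1)

/-- The q-factorial `[m]!_q`. -/
noncomputable def qfac (m : ℕ) : RatFunc ℚ := ∏ i ∈ Finset.range m, qint (i + 1)

/-- The Gaussian q-binomial coefficient `[a choose b]_q`, zero when `b < 0` or `b > a`. -/
noncomputable def qbin (a b : ℤ) : RatFunc ℚ :=
  if 0 ≤ b ∧ b ≤ a then qfac a.toNat / (qfac b.toNat * qfac (a - b).toNat) else 0

/-- The first generalized q-binomial coefficient `(n choose p, k)_q`:
`([n]_q/[k]_q) · Σ_{r≥0} [p choose r]_q [n-p choose r]_q [n-r-1 choose k-r-1]_q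
  q^{(n-p)p + r(r-k)}`. -/
noncomputable def gchoose (n p k : ℕ) : RatFunc ℚ :=
  (qint n / qint k) *
    ∑ r ∈ Finset.range (n + 1),
      qbin p r * qbin ((n : ℤ) - p) r * qbin ((n : ℤ) - r - 1) ((k : ℤ) - r - 1) *
        q ^ (((n : ℤ) - p) * p + (r : ℤ) * ((r : ℤ) - k))

/-!
Since `[1 choose r]_q = 0` for `r ≥ 2`, only the terms `r = 0, 1` of the sum survive. The
absorption identity `[m]_q [m-1 choose j-1]_q = [j]_q [m choose j]_q` turns both into multiples
of `[n-1 choose k-1]_q`, and `q^(n-1) + [k-1]_q q^(n-k) = [k]_q q^(n-k)` collapses their sum;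
one more absorption step gives the right-hand side.
-/

lemma q_ne_zero : q ≠ 0 := RatFunc.X_ne_zero

lemma one_sub_q_pow_ne_zero {m : ℕ} (hm : 0 < m) : 1 - q ^ m ≠ 0 := by
  intro h
  have hpoly : (1 - Polynomial.X ^ m : Polynomial ℚ) = 0 := by
    apply RatFunc.algebraMap_injective ℚ
    simpa [q, RatFunc.algebraMap_X] using h
  simpa [hm.ne'] using congrArg (Polynomial.eval 0) hpoly

lemma one_sub_q_ne_zero : 1 - q ≠ 0 := by
  simpa using one_sub_q_pow_ne_zero one_pos

lemma qint_zero : qint 0 = 0 := by simp [qint]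

lemma qint_one : qint 1 = 1 := by
  rw [qint, pow_one]
  exact div_self one_sub_q_ne_zero

lemma qint_succ (m : ℕ) : qint (m + 1) = qint m + q ^ m := by
  unfold qint
  field_simp [one_sub_q_ne_zero]
  ring

lemma qint_ne_zero {m : ℕ} (hm : 0 < m) : qint m ≠ 0 :=
  div_ne_zero (one_sub_q_pow_ne_zero hm) one_sub_q_ne_zero

lemma qfac_zero : qfac 0 = 1 := rfl

lemma qfac_succ (m : ℕ) : qfac (m + 1) = qfac m * qint (m + 1) :=
  prod_range_succ _ _

lemma qfac_ne_zero (m : ℕ) : qfac m ≠ 0 :=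
  prod_ne_zero_iff.mpr fun i _ ↦ qint_ne_zero i.succ_pos

lemma qbin_of_neg {a b : ℤ} (hb : b < 0) : qbin a b = 0 := by
  rw [qbin, if_neg]; omega

lemma qbin_of_lt {a b : ℤ} (hab : a < b) : qbin a b = 0 := by
  rw [qbin, if_neg]; omega

lemma qbin_natCast_of_le {m j : ℕ} (hjm : j ≤ m) :
    qbin m j = qfac m / (qfac j * qfac (m - j)) := by
  rw [qbin, if_pos (by omega)]
  congr
  omega

lemma qbin_natCast_zero (m : ℕ) : qbin m 0 = 1 := by
  rw [← Nat.cast_zero, qbin_natCast_of_le (Nat.zero_le m)]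
  simp [qfac_zero, qfac_ne_zero]

lemma qbin_one_right (m : ℕ) : qbin m 1 = qint m := by
  cases m with
  | zero => simp [qbin_of_lt, qint_zero]
  | succ m =>
    rw [← Nat.cast_one (R := ℤ), qbin_natCast_of_le (by omega), qfac_succ, qfac_succ]
    simp [qfac_zero, qint_one, qfac_ne_zero]

lemma qint_succ_mul_qbin (m j : ℕ) :
    qint (m + 1) * qbin m j = qint (j + 1) * qbin (m + 1) (j + 1) := by
  rcases le_or_gt j m with hjm | hmj
  · rw [← Nat.cast_add_one, ← Nat.cast_add_one, qbin_natCast_of_le hjm,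
      qbin_natCast_of_le (Nat.add_le_add_right hjm 1), Nat.add_sub_add_right, qfac_succ, qfac_succ]
    have := qint_ne_zero j.succ_pos
    field_simp [qfac_ne_zero]
  · rw [qbin_of_lt (by omega), qbin_of_lt (by omega), mul_zero, mul_zero]

lemma qint_mul_qbin_sub_one (m j : ℕ) :
    qint m * qbin (m - 1) (j - 1) = qint j * qbin m j := by
  cases m with
  | zero => cases j <;> simp [qint_zero, qbin_of_lt]
  | succ m =>
    cases j with
    | zero => simp [qint_zero, qbin_of_neg]
    | succ j => simpa using qint_succ_mul_qbin m j

lemma gchoose_one_succ (m j : ℕ) :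
    gchoose (m + 1) 1 (j + 1) = qint (m + 1) / qint (j + 1) *
      (qbin m j * q ^ m + qint m * qbin (m - 1) (j - 1) * q ^ ((m : ℤ) - j)) := by
  have hqbin_one_one : qbin 1 1 = 1 := by simpa [qint_one] using qbin_one_right 1
  rw [gchoose, ← sum_subset (range_mono (show 2 ≤ m + 2 by omega)) fun r _ hr ↦ ?_,
    sum_range_succ, sum_range_one]
  · push_cast
    rw [add_sub_cancel_right, sub_zero, sub_zero, add_sub_cancel_right, ← Nat.cast_one (R := ℤ),
      qbin_natCast_zero, qbin_natCast_zero, Nat.cast_one, hqbin_one_one, qbin_one_right,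
      ← zpow_natCast]
    ring_nf
  · rw [qbin_of_lt (by simp at hr; omega), zero_mul, zero_mul, zero_mul]

lemma q_pow_eq_mul_zpow_sub (m j : ℕ) : q ^ m = q ^ j * q ^ ((m : ℤ) - j) := by
  rw [← zpow_natCast, ← zpow_natCast, ← zpow_add₀ q_ne_zero, add_sub_cancel]

theorem gchoose_p_eq_one_general (n k : ℕ) :
    gchoose n 1 k = qint k * q ^ ((n : ℤ) - k) * qbin n k := by
  rw [mul_right_comm, ← qint_mul_qbin_sub_one]
  obtain _ | m := n
  · simp [gchoose, qint_zero]
  obtain _ | j := k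
  · simp [gchoose, qint_zero, qbin_of_neg]
  have hj : qint (j + 1) ≠ 0 := qint_ne_zero j.succ_pos
  rw [gchoose_one_succ, qint_mul_qbin_sub_one, q_pow_eq_mul_zpow_sub m j]
  simp only [Nat.cast_add_one, add_sub_cancel_right, add_sub_add_right_eq_sub]
  field_simp
  rw [qint_succ j]
  ring

theorem gchoose_p_eq_one (n k : ℕ) (hn : 0 < n) (hk : 0 < k) (hkn : k ≤ n) :
    gchoose n 1 k = qint k * q ^ ((n : ℤ) - k) * qbin n k :=
  gchoose_p_eq_one_general n k
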